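/- For every i ∈ {1,2,3,4} and all vectors α, β ∈ ℂ²: if ⟨γ_j, α ⊗ β⟩ = 0 for all j ∈ {1,2,3,4} with j ≠ i, then α ⊗ β = 0 (i.e., α = 0 or β = 0). Equivalently, for each i the one-dimensional orthogonal complement of span{γ_j : j ≠ i} in ℂ²⊗ℂ² contains no nonzero product vector, so no member γ_i of the antiparallel double-SIC ensemble admits a product detecting state. (This is the content of the second part of Proposition 4: S^{↑↓} is not a genuinely unextendible product basis and hence does not allow conclusive local discrimination.) -/

import Mathlib

/-!
Since `⟪s ⊗ t, a ⊗ b⟫ = ⟪s, a⟫ ⟪t, b⟫`, each of the three conditions `j ≠ i` forces `a ⊥ s_j`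
or `b ⊥ s_j^⊥`, and by pigeonhole one of the two alternatives occurs for two distinct `j`.
Any two distinct SIC vectors, and likewise any two of their orthogonal partners, are linearly
independent, so their common orthogonal complement in `ℂ²` is trivial and `a = 0` or `b = 0`.
-/

noncomputable section
open scoped ComplexInnerProductSpace

abbrev Qubit : Type := EuclideanSpace ℂ (Fin 2)

def tp {ι κ : Type} (x : EuclideanSpace ℂ ι) (y : EuclideanSpace ℂ κ) :
    EuclideanSpace ℂ (ι × κ) :=
  (WithLp.equiv 2 (ι × κ → ℂ)).symm (fun p => x p.1 * y p.2)

def mk2 (a b : ℂ) : Qubit := (WithLp.equiv 2 (Fin 2 → ℂ)).symm ![a, b]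

def ζ (k : ℤ) : ℂ := Complex.exp (2 * (Real.pi : ℂ) * Complex.I * (k : ℂ) / 3)

def r3 : ℂ := ((Real.sqrt 3 : ℂ))⁻¹

def r2 : ℂ := (Real.sqrt 2 : ℂ)

/-- The paper's `s_1, …, s_4`, indexed by `Fin 4`. -/
def s : Fin 4 → Qubit :=
  ![mk2 1 0,
    mk2 r3 (r3 * r2 * ζ 0),
    mk2 r3 (r3 * r2 * ζ 1),
    mk2 r3 (r3 * r2 * ζ 2)]

def sperp : Fin 4 → Qubit :=
  ![mk2 0 1,
    mk2 (r3 * r2 * ζ 0) (-r3),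
    mk2 (r3 * r2 * ζ (-1)) (-r3),
    mk2 (r3 * r2 * ζ (-2)) (-r3)]

def γ (i : Fin 4) : EuclideanSpace ℂ (Fin 2 × Fin 2) := tp (s i) (sperp i)

open Finset Submodule ComplexConjugate
open scoped InnerProductSpace

section InnerProduct

variable {𝕜 E F : Type*} [RCLike 𝕜] [NormedAddCommGroup E] [InnerProductSpace 𝕜 E]
  [NormedAddCommGroup F] [InnerProductSpace 𝕜 F]

theorem mem_orthogonal_span_pair_iff {x y a : E} :
    a ∈ (span 𝕜 {x, y})ᗮ ↔ ⟪x, a⟫_𝕜 = 0 ∧ ⟪y, a⟫_𝕜 = 0 := by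
  rw [span_insert, ← inf_orthogonal, Submodule.mem_inf,
    mem_orthogonal_singleton_iff_inner_right, mem_orthogonal_singleton_iff_inner_right]

theorem eq_zero_or_eq_zero_of_inner_mul_inner_eq_zero {τ : Type*} {u : τ → E} {v : τ → F}
    (hu : Pairwise fun j k => (span 𝕜 {u j, u k})ᗮ = ⊥)
    (hv : Pairwise fun j k => (span 𝕜 {v j, v k})ᗮ = ⊥)
    {S : Finset τ} (hS : 2 < #S) {a : E} {b : F}
    (h : ∀ j ∈ S, ⟪u j, a⟫_𝕜 * ⟪v j, b⟫_𝕜 = 0) : a = 0 ∨ b = 0 := by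
  classical
  obtain ⟨j, hj, k, hk, hjk, hside⟩ := exists_ne_map_eq_of_card_lt_of_maps_to
    (t := univ) (f := fun j => decide (⟪u j, a⟫_𝕜 = 0)) (by simpa using hS) fun _ _ => mem_univ _
  simp only [decide_eq_decide] at hside
  by_cases ha : ⟪u j, a⟫_𝕜 = 0
  · left
    rw [← mem_bot 𝕜, ← hu hjk, mem_orthogonal_span_pair_iff]
    exact ⟨ha, hside.1 ha⟩
  · right
    have hb : ⟪v j, b⟫_𝕜 = 0 ∧ ⟪v k, b⟫_𝕜 = 0 :=
      ⟨(mul_eq_zero.1 (h j hj)).resolve_left ha,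
        (mul_eq_zero.1 (h k hk)).resolve_left (mt hside.2 ha)⟩
    rwa [← mem_bot 𝕜, ← hv hjk, mem_orthogonal_span_pair_iff]

end InnerProduct

section TensorProduct

variable {ι κ : Type}

theorem inner_tp_tp [Fintype ι] [Fintype κ] (x a : EuclideanSpace ℂ ι)
    (y b : EuclideanSpace ℂ κ) :
    ⟪tp x y, tp a b⟫ = ⟪x, a⟫ * ⟪y, b⟫ := by
  simp only [tp, PiLp.inner_apply, Fintype.sum_prod_type, sum_mul_sum, RCLike.inner_apply,
    WithLp.equiv_symm_apply, map_mul]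
  refine sum_congr rfl fun _ _ => sum_congr rfl fun _ _ => ?_
  ring

theorem tp_eq_zero_of_eq_zero_or_eq_zero {x : EuclideanSpace ℂ ι} {y : EuclideanSpace ℂ κ}
    (h : x = 0 ∨ y = 0) : tp x y = 0 := by
  ext p
  rcases h with rfl | rfl <;> simp [tp]

end TensorProduct

section Qubit

@[simp] theorem mk2_apply_zero (a b : ℂ) : mk2 a b 0 = a := rfl

@[simp] theorem mk2_apply_one (a b : ℂ) : mk2 a b 1 = b := rfl

theorem smul_mk2 (c a b : ℂ) : c • mk2 a b = mk2 (c * a) (c * b) := by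
  ext i
  fin_cases i <;> rfl

theorem orthogonal_span_pair_eq_bot_of_det_ne_zero {x y : Qubit}
    (hdet : x 0 * y 1 - x 1 * y 0 ≠ 0) : (span ℂ {x, y})ᗮ = ⊥ := by
  refine (Submodule.eq_bot_iff _).2 fun a ha => ?_
  obtain ⟨hx, hy⟩ := mem_orthogonal_span_pair_iff.1 ha
  simp only [PiLp.inner_apply, Fin.sum_univ_two, RCLike.inner_apply] at hx hy
  have hdet_conj : conj (x 0) * conj (y 1) - conj (x 1) * conj (y 0) ≠ 0 := by
    rwa [← map_mul, ← map_mul, ← map_sub, map_ne_zero]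
  have h0 : a 0 = 0 := (mul_eq_zero.1 <| by
    linear_combination conj (y 1) * hx - conj (x 1) * hy).resolve_left hdet_conj
  have h1 : a 1 = 0 := (mul_eq_zero.1 <| by
    linear_combination conj (x 0) * hy - conj (y 0) * hx).resolve_left hdet_conj
  ext i
  fin_cases i
  exacts [h0, h1]

end Qubit

section SIC

theorem zeta_ne_zero (k : ℤ) : ζ k ≠ 0 := Complex.exp_ne_zero _

theorem conj_zeta (k : ℤ) : conj (ζ k) = ζ (-k) := by
  rw [ζ, ζ, ← Complex.exp_conj]
  simp [map_div₀, Complex.conj_I, map_ofNat]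

theorem dvd_sub_of_zeta_eq {a b : ℤ} (h : ζ a = ζ b) : (3 : ℤ) ∣ a - b := by
  obtain ⟨n, hn⟩ := Complex.exp_eq_exp_iff_exists_int.1 h
  have h2πI : 2 * (Real.pi : ℂ) * Complex.I ≠ 0 := by
    simp [Real.pi_ne_zero, Complex.I_ne_zero]
  have hcast : ((a - b : ℤ) : ℂ) = ((3 * n : ℤ) : ℂ) := by
    push_cast
    exact mul_left_cancel₀ h2πI (by linear_combination 3 * hn)
  exact ⟨n, Int.cast_injective hcast⟩

theorem r2_ne_zero : r2 ≠ 0 := by simp [r2]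

theorem r3_ne_zero : r3 ≠ 0 := by simp [r3]

theorem conj_r2 : conj r2 = r2 := Complex.conj_ofReal _

/-- `s j` is proportional to `(1, sicRatio j)` and `sperp j` to `(conj (sicRatio j), -1)`. -/
def sicRatio : Fin 4 → ℂ := ![0, r2 * ζ 0, r2 * ζ 1, r2 * ζ 2]

theorem sicRatio_injective : Function.Injective sicRatio := by
  have hζ : ∀ a b : ℤ, ¬ (3 : ℤ) ∣ a - b → r2 * ζ a ≠ r2 * ζ b := fun a b hab h =>
    hab (dvd_sub_of_zeta_eq (mul_left_cancel₀ r2_ne_zero h))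
  have h0 : ∀ k : ℤ, r2 * ζ k ≠ 0 := fun k => mul_ne_zero r2_ne_zero (zeta_ne_zero k)
  simp only [sicRatio, Matrix.vecCons, Fin.cons_injective_iff, Set.mem_range, not_exists,
    Fin.forall_fin_succ, Fin.cons_zero, Fin.cons_succ, IsEmpty.forall_iff, and_true,
    Function.injective_of_subsingleton]
  exact ⟨⟨h0 0, h0 1, h0 2⟩, ⟨hζ 1 0 (by decide), hζ 2 0 (by decide)⟩, hζ 2 1 (by decide)⟩

theorem s_eq_smul (j : Fin 4) : ∃ c : ℂ, c ≠ 0 ∧ s j = c • mk2 1 (sicRatio j) := by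
  fin_cases j
  · exact ⟨1, one_ne_zero, by simp [s, sicRatio]⟩
  all_goals exact ⟨r3, r3_ne_zero, by simp [s, sicRatio, smul_mk2, mul_assoc]⟩

theorem sperp_eq_smul (j : Fin 4) :
    ∃ c : ℂ, c ≠ 0 ∧ sperp j = c • mk2 (conj (sicRatio j)) (-1) := by
  fin_cases j
  · exact ⟨-1, neg_ne_zero.2 one_ne_zero, by rw [smul_mk2]; simp [sperp, sicRatio]⟩
  all_goals exact ⟨r3, r3_ne_zero,
    by simp [sperp, sicRatio, smul_mk2, conj_r2, conj_zeta, mul_assoc]⟩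

theorem pairwise_orthogonal_span_s_eq_bot : Pairwise fun j k => (span ℂ {s j, s k})ᗮ = ⊥ := by
  intro j k hjk
  obtain ⟨c, hc, hj⟩ := s_eq_smul j
  obtain ⟨d, hd, hk⟩ := s_eq_smul k
  apply orthogonal_span_pair_eq_bot_of_det_ne_zero
  have hne : c * d * (sicRatio k - sicRatio j) ≠ 0 :=
    mul_ne_zero (mul_ne_zero hc hd) (sub_ne_zero.2 (sicRatio_injective.ne hjk.symm))
  rw [hj, hk, smul_mk2, smul_mk2]
  convert hne using 1
  simp only [mk2_apply_zero, mk2_apply_one]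
  ring

theorem pairwise_orthogonal_span_sperp_eq_bot :
    Pairwise fun j k => (span ℂ {sperp j, sperp k})ᗮ = ⊥ := by
  intro j k hjk
  obtain ⟨c, hc, hj⟩ := sperp_eq_smul j
  obtain ⟨d, hd, hk⟩ := sperp_eq_smul k
  apply orthogonal_span_pair_eq_bot_of_det_ne_zero
  have hne : c * d * (conj (sicRatio k) - conj (sicRatio j)) ≠ 0 :=
    mul_ne_zero (mul_ne_zero hc hd)
      (sub_ne_zero.2 ((RingHom.injective _).ne (sicRatio_injective.ne hjk.symm)))
  rw [hj, hk, smul_mk2, smul_mk2]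
  convert hne using 1
  simp only [mk2_apply_zero, mk2_apply_one]
  ring

end SIC

/-- For every `i` and all `α, β ∈ ℂ²`: if `⟨γ_j, α ⊗ β⟩ = 0` for every `j ≠ i`, then
`α ⊗ β = 0`; i.e. the orthogonal complement of `span {γ_j : j ≠ i}` contains no nonzero
product vector, so no `γ_i` admits a product detecting state. -/
theorem antiparallel_double_SIC_no_product_detecting_state (i : Fin 4) (α β : Qubit)
    (h : ∀ j : Fin 4, j ≠ i → ⟪γ j, tp α β⟫ = 0) :
    tp α β = 0 := by
  have hprod : ∀ j ∈ univ.erase i, ⟪s j, α⟫ * ⟪sperp j, β⟫ = 0 := fun j hj => by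
    rw [← inner_tp_tp]
    exact h j (ne_of_mem_erase hj)
  exact tp_eq_zero_of_eq_zero_or_eq_zero <|
    eq_zero_or_eq_zero_of_inner_mul_inner_eq_zero pairwise_orthogonal_span_s_eq_bot
      pairwise_orthogonal_span_sperp_eq_bot (by simp) hprod
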